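/- arXiv:1709.00385 — 3 statements merged into one kernel-verified Lean document; each statement's English description precedes it below -/
import Mathlib

section
/- Let V be a real Hilbert space, A : V → V a self-adjoint continuous linear operator with ⟨A x, x⟩ ≥ 0 for all x ∈ V, and τ > 0. Suppose u_n, u_half ∈ V satisfy the Crank–Nicolson half-step relation (2/τ)(u_half − u_n) = −A u_half, and set u_{n+1} = 2·u_half − u_n. Then ‖u_{n+1}‖ ≤ ‖u_n‖. (This is the stability bound underlying the paper's Lemma 1, stating that successive semi-discrete Crank–Nicolson solutions of the heat equation are bounded by the previous time step.) -/
/-!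
Write `w = u_half`. Expanding the square gives `‖2w - u‖² = ‖u‖² + 4⟪w - u, w⟫`, and the
half-step relation turns `⟪w - u, w⟫` into `-(τ/2)⟪A w, w⟫ ≤ 0`.
-/

open RealInnerProductSpace

section

variable {V : Type*} [NormedAddCommGroup V] [InnerProductSpace ℝ V]

theorem norm_two_smul_sub_sq (u w : V) :
    ‖(2 : ℝ) • w - u‖ ^ 2 = ‖u‖ ^ 2 + 4 * ⟪w - u, w⟫ := by
  simp only [← real_inner_self_eq_norm_sq, inner_sub_left, inner_sub_right,
    real_inner_smul_left, real_inner_smul_right, real_inner_comm u w]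
  ring

theorem norm_two_smul_sub_le_of_inner_sub_nonpos {u w : V} (h : ⟪w - u, w⟫ ≤ 0) :
    ‖(2 : ℝ) • w - u‖ ≤ ‖u‖ := by
  refine pow_le_pow_iff_left₀ (norm_nonneg _) (norm_nonneg _) two_ne_zero |>.mp ?_
  rw [norm_two_smul_sub_sq]
  linarith

theorem inner_sub_nonpos_of_smul_sub_eq_neg {A : V → V} {c : ℝ} {u w : V} (hc : 0 < c)
    (hstep : c • (w - u) = -A w) (hA : 0 ≤ ⟪A w, w⟫) : ⟪w - u, w⟫ ≤ 0 := by
  have h : c * ⟪w - u, w⟫ = -⟪A w, w⟫ := by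
    rw [← real_inner_smul_left, hstep, inner_neg_left]
  nlinarith

end

theorem crank_nicolson_stability_general
    {V : Type*} [NormedAddCommGroup V] [InnerProductSpace ℝ V]
    (A : V →L[ℝ] V)
    (hpsd : ∀ x : V, 0 ≤ ⟪A x, x⟫)
    (τ : ℝ) (hτ : 0 < τ) (un uhalf unp1 : V)
    (hstep : (2 / τ) • (uhalf - un) = -(A uhalf))
    (hnext : unp1 = (2 : ℝ) • uhalf - un) :
    ‖unp1‖ ≤ ‖un‖ := by
  rw [hnext]
  exact norm_two_smul_sub_le_of_inner_sub_nonpos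
    (inner_sub_nonpos_of_smul_sub_eq_neg (by positivity) hstep (hpsd uhalf))

/-- Stability of the Crank–Nicolson semi-discretization: for a self-adjoint,
positive-semidefinite continuous operator `A`, successive semi-discrete solutions
satisfy `‖u_{n+1}‖ ≤ ‖u_n‖`. -/
theorem crank_nicolson_stability
    {V : Type*} [NormedAddCommGroup V] [InnerProductSpace ℝ V] [CompleteSpace V]
    (A : V →L[ℝ] V)
    (hsa : ∀ x y : V, ⟪A x, y⟫ = ⟪x, A y⟫)
    (hpsd : ∀ x : V, 0 ≤ ⟪A x, x⟫)
    (τ : ℝ) (hτ : 0 < τ) (un uhalf unp1 : V)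
    (hstep : (2 / τ) • (uhalf - un) = -(A uhalf))
    (hnext : unp1 = (2 : ℝ) • uhalf - un) :
    ‖unp1‖ ≤ ‖un‖ :=
  crank_nicolson_stability_general A hpsd τ hτ un uhalf unp1 hstep hnext
end

section
/- Let V and W be real Hilbert spaces, L : V → W a continuous linear map, and c > 0 a constant such that c‖v‖ ≤ ‖L v‖ for all v ∈ V. Let 𝒱_h be a subspace of V. Suppose: x̂ ∈ V satisfies L x̂ = F (exact solution with data F); x_h ∈ 𝒱_h satisfies ⟨L x_h − F_h, L φ⟩ = 0 for all φ ∈ 𝒱_h (discrete solution with perturbed data F_h); and x̃_h ∈ 𝒱_h satisfies ⟨L x̃_h − F, L φ⟩ = 0 for all φ ∈ 𝒱_h (discrete solution with the exact data F). Then for every v_h ∈ 𝒱_h, ‖x_h − x̂‖ ≤ (1/c)·‖F_h − F‖ + (‖L‖/c)·‖v_h − x̂‖. (This is the abstract form of Lemma 4, bounding the discrete solution's error by a data-perturbation term plus a best-approximation term.) -/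
/-!
Let `x̃_h` be the discrete solution with the exact data `F`. The two discrete solutions are
least-squares projections in `W`, so `‖L (x_h - x̃_h)‖ ≤ ‖F_h - F‖`, while Galerkin
orthogonality makes `L x̃_h` the best approximation of `F = L x̂` from `L 𝒱_h`, so
`‖L (x̃_h - x̂)‖ ≤ ‖L (v_h - x̂)‖ ≤ ‖L‖ ‖v_h - x̂‖`. Coercivity turns both bounds on `L`-images
into bounds in `V`, and the triangle inequality through `x̃_h` concludes.
-/

open RealInnerProductSpace

theorem norm_le_norm_of_inner_sub_self_eq_zero {E : Type*} [NormedAddCommGroup E]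
    [InnerProductSpace ℝ E] {a b : E} (h : ⟪a, b - a⟫ = 0) : ‖a‖ ≤ ‖b‖ := by
  have hpyth : ‖b‖ ^ 2 = ‖a‖ ^ 2 + ‖b - a‖ ^ 2 := by
    simpa [sq] using norm_add_sq_eq_norm_sq_add_norm_sq_real h
  exact (sq_le_sq₀ (norm_nonneg a) (norm_nonneg b)).1 (by nlinarith [sq_nonneg ‖b - a‖])

section LeastSquares

variable {V W : Type*} [NormedAddCommGroup V] [InnerProductSpace ℝ V]
  [NormedAddCommGroup W] [InnerProductSpace ℝ W] (L : V →L[ℝ] W) (S : Submodule ℝ V)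

theorem norm_map_sub_le_norm_sub_of_leastSquares {x x' : V} {G G' : W}
    (hx : x ∈ S) (hx' : x' ∈ S)
    (hweak : ∀ φ ∈ S, ⟪L x - G, L φ⟫ = 0) (hweak' : ∀ φ ∈ S, ⟪L x' - G', L φ⟫ = 0) :
    ‖L (x - x')‖ ≤ ‖G - G'‖ := by
  refine norm_le_norm_of_inner_sub_self_eq_zero ?_
  have hsplit : G - G' - L (x - x') = -((L x - G) - (L x' - G')) := by
    rw [map_sub]; abel
  rw [hsplit, inner_neg_right, real_inner_comm, inner_sub_left,
    hweak _ (S.sub_mem hx hx'), hweak' _ (S.sub_mem hx hx'), sub_zero, neg_zero]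

theorem norm_map_sub_le_norm_map_sub_of_leastSquares {x y v : V} (hx : x ∈ S) (hv : v ∈ S)
    (hweak : ∀ φ ∈ S, ⟪L x - L y, L φ⟫ = 0) :
    ‖L (x - y)‖ ≤ ‖L (v - y)‖ := by
  refine norm_le_norm_of_inner_sub_self_eq_zero ?_
  have hsplit : L (v - y) - L (x - y) = -L (x - v) := by
    simp only [map_sub]; abel
  rw [hsplit, inner_neg_right, map_sub L x y, hweak _ (S.sub_mem hx hv), neg_zero]

end LeastSquares

theorem norm_le_div_of_mul_norm_le_norm_map {V W : Type*} [NormedAddCommGroup V]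
    [NormedAddCommGroup W] [NormedSpace ℝ V] [NormedSpace ℝ W] {L : V →L[ℝ] W} {c : ℝ}
    (hc : 0 < c) (hcoer : ∀ v : V, c * ‖v‖ ≤ ‖L v‖) {v : V} {B : ℝ} (hB : ‖L v‖ ≤ B) :
    ‖v‖ ≤ B / c := by
  rw [le_div_iff₀ hc, mul_comm]
  exact (hcoer v).trans hB

theorem fosls_error_with_perturbed_data_general
    {V W : Type*} [NormedAddCommGroup V] [InnerProductSpace ℝ V]
    [NormedAddCommGroup W] [InnerProductSpace ℝ W]
    (L : V →L[ℝ] W) (c : ℝ) (hc : 0 < c)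
    (hcoer : ∀ v : V, c * ‖v‖ ≤ ‖L v‖)
    (𝒱h : Submodule ℝ V) (F Fh : W)
    (xhat : V) (hexact : L xhat = F)
    (xh : V) (hxh : xh ∈ 𝒱h)
    (hweakh : ∀ φ ∈ 𝒱h, ⟪L xh - Fh, L φ⟫ = 0)
    (xth : V) (hxth : xth ∈ 𝒱h)
    (hweakt : ∀ φ ∈ 𝒱h, ⟪L xth - F, L φ⟫ = 0) :
    ∀ vh ∈ 𝒱h, ‖xh - xhat‖ ≤ (1 / c) * ‖Fh - F‖ + (‖L‖ / c) * ‖vh - xhat‖ := by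
  intro vh hvh
  subst hexact
  have hdata : ‖xh - xth‖ ≤ ‖Fh - L xhat‖ / c :=
    norm_le_div_of_mul_norm_le_norm_map hc hcoer
      (norm_map_sub_le_norm_sub_of_leastSquares L 𝒱h hxh hxth hweakh hweakt)
  have happrox : ‖xth - xhat‖ ≤ ‖L‖ * ‖vh - xhat‖ / c :=
    norm_le_div_of_mul_norm_le_norm_map hc hcoer
      ((norm_map_sub_le_norm_map_sub_of_leastSquares L 𝒱h hxth hvh hweakt).trans
        (L.le_opNorm _))
  calc ‖xh - xhat‖ ≤ ‖xh - xth‖ + ‖xth - xhat‖ := norm_sub_le_norm_sub_add_norm_sub _ _ _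
    _ ≤ (1 / c) * ‖Fh - L xhat‖ + (‖L‖ / c) * ‖vh - xhat‖ := by
      rw [one_div_mul_eq_div, div_mul_eq_mul_div]
      exact add_le_add hdata happrox

/-- Abstract form of Lemma 4: the error of the discrete FOSLS solution with
perturbed data is bounded by a data-perturbation term plus a best-approximation
term. -/
theorem fosls_error_with_perturbed_data
    {V W : Type*} [NormedAddCommGroup V] [InnerProductSpace ℝ V] [CompleteSpace V]
    [NormedAddCommGroup W] [InnerProductSpace ℝ W] [CompleteSpace W]
    (L : V →L[ℝ] W) (c : ℝ) (hc : 0 < c)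
    (hcoer : ∀ v : V, c * ‖v‖ ≤ ‖L v‖)
    (𝒱h : Submodule ℝ V) (F Fh : W)
    (xhat : V) (hexact : L xhat = F)
    (xh : V) (hxh : xh ∈ 𝒱h)
    (hweakh : ∀ φ ∈ 𝒱h, ⟪L xh - Fh, L φ⟫ = 0)
    (xth : V) (hxth : xth ∈ 𝒱h)
    (hweakt : ∀ φ ∈ 𝒱h, ⟪L xth - F, L φ⟫ = 0) :
    ∀ vh ∈ 𝒱h, ‖xh - xhat‖ ≤ (1 / c) * ‖Fh - F‖ + (‖L‖ / c) * ‖vh - xhat‖ :=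
  fosls_error_with_perturbed_data_general L c hc hcoer 𝒱h F Fh xhat hexact xh hxh hweakh xth hxth
    hweakt
end

section
/- Let V, W, Z be real Hilbert spaces, B : V → W and C : W → Z continuous linear maps, B* the Hilbert-adjoint of B, and τ > 0. Define the FOSLS operator L_τ : V × W → V × W × Z by L_τ(u, w) = (B* w + (2/τ) u, w − B u, C w). Let 𝒱_h be a subspace of V × W, let u_n^h ∈ V, and suppose (u^h, V^h) ∈ 𝒱_h satisfies the discrete FOSLS equations ⟨L_τ(u^h, V^h) − ((2/τ) u_n^h, 0, 0), L_τ φ⟩ = 0 for all φ ∈ 𝒱_h. Set u_{n+1}^h = 2 u^h − u_n^h and define the discrete energy-law residual E = (‖u_{n+1}^h‖² − ‖u_n^h‖²)/(2τ) + ‖V^h‖². Then for every φ ∈ 𝒱_h, E = ⟨L_τ(u^h, V^h) − ((2/τ) u_n^h, 0, 0), (u^h, V^h, 0) − L_τ φ⟩. (This is the key residual representation of the discrete energy law established in the proof of Theorem 1.) -/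
open RealInnerProductSpace

/-! Galerkin orthogonality removes the `Lτ φ` term. In the pairing of the residual with
`(uʰ, Vʰ, 0)` the two `B`-terms cancel by adjointness, and the Crank–Nicolson identity
`‖2u - u₀‖² - ‖u₀‖² = 4 ⟪u - u₀, u⟫` turns what is left into the energy-law residual. -/

theorem norm_two_smul_sub_sq_sub_norm_sq {E : Type*} [NormedAddCommGroup E]
    [InnerProductSpace ℝ E] (u v : E) :
    ‖(2 : ℝ) • u - v‖ ^ 2 - ‖v‖ ^ 2 = 4 * ⟪u - v, u⟫ := by
  rw [norm_sub_sq_real, norm_smul, real_inner_smul_left, inner_sub_left,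
    real_inner_self_eq_norm_sq, real_inner_comm]
  norm_num
  ring

theorem inner_adjoint_add_smul_sub_add_inner_sub
    {V W : Type*} [NormedAddCommGroup V] [InnerProductSpace ℝ V] [CompleteSpace V]
    [NormedAddCommGroup W] [InnerProductSpace ℝ W] [CompleteSpace W]
    (B : V →L[ℝ] W) (c : ℝ) (u u₀ : V) (w : W) :
    ⟪ContinuousLinearMap.adjoint B w + c • u - c • u₀, u⟫ + ⟪w - B u, w⟫ =
      c * ⟪u - u₀, u⟫ + ‖w‖ ^ 2 := by
  rw [add_sub_assoc, ← smul_sub, inner_add_left, ContinuousLinearMap.adjoint_inner_left,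
    real_inner_smul_left, inner_sub_left w, real_inner_self_eq_norm_sq w,
    real_inner_comm w (B u)]
  ring

theorem fosls_energy_law_residual_representation_general
    {V W Z : Type*} [NormedAddCommGroup V] [InnerProductSpace ℝ V] [CompleteSpace V]
    [NormedAddCommGroup W] [InnerProductSpace ℝ W] [CompleteSpace W]
    [NormedAddCommGroup Z] [InnerProductSpace ℝ Z]
    (B : V →L[ℝ] W) (C : W →L[ℝ] Z) (τ : ℝ)
    (Lτ : WithLp 2 (V × W) →L[ℝ] WithLp 2 (V × WithLp 2 (W × Z)))
    (hLτ : ∀ (u : V) (w : W),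
      Lτ ((WithLp.equiv 2 (V × W)).symm (u, w)) =
        (WithLp.equiv 2 (V × WithLp 2 (W × Z))).symm
          (ContinuousLinearMap.adjoint B w + (2 / τ) • u,
            (WithLp.equiv 2 (W × Z)).symm (w - B u, C w)))
    (𝒱h : Submodule ℝ (WithLp 2 (V × W)))
    (unh uh : V) (Vh : W)
    (hFOSLS : ∀ φ ∈ 𝒱h,
      ⟪Lτ ((WithLp.equiv 2 (V × W)).symm (uh, Vh)) -
          (WithLp.equiv 2 (V × WithLp 2 (W × Z))).symm
            ((2 / τ) • unh, (WithLp.equiv 2 (W × Z)).symm (0, 0)),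
        Lτ φ⟫ = 0)
    (unp1 : V) (hnext : unp1 = (2 : ℝ) • uh - unh)
    (E : ℝ) (hE : E = (‖unp1‖ ^ 2 - ‖unh‖ ^ 2) / (2 * τ) + ‖Vh‖ ^ 2) :
    ∀ φ ∈ 𝒱h,
      E = ⟪Lτ ((WithLp.equiv 2 (V × W)).symm (uh, Vh)) -
            (WithLp.equiv 2 (V × WithLp 2 (W × Z))).symm
              ((2 / τ) • unh, (WithLp.equiv 2 (W × Z)).symm (0, 0)),
          (WithLp.equiv 2 (V × WithLp 2 (W × Z))).symm
              (uh, (WithLp.equiv 2 (W × Z)).symm (Vh, 0)) - Lτ φ⟫ := by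
  intro φ hφ
  rw [inner_sub_right, hFOSLS φ hφ, sub_zero, hLτ]
  simp only [WithLp.equiv_symm_apply, ← WithLp.toLp_sub, WithLp.prod_inner_apply,
    Prod.mk_sub_mk, sub_zero, inner_zero_right, add_zero]
  rw [inner_adjoint_add_smul_sub_add_inner_sub, hE, hnext, norm_two_smul_sub_sq_sub_norm_sq]
  ring

/-- Residual representation of the discrete energy law for the FOSLS
discretization of the Crank–Nicolson half-step of the heat equation
(key identity in the proof of Theorem 1).  Product spaces carry the
product (ℓ²) Hilbert structure, realized via `WithLp 2`. -/
theorem fosls_energy_law_residual_representation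
    {V W Z : Type*} [NormedAddCommGroup V] [InnerProductSpace ℝ V] [CompleteSpace V]
    [NormedAddCommGroup W] [InnerProductSpace ℝ W] [CompleteSpace W]
    [NormedAddCommGroup Z] [InnerProductSpace ℝ Z] [CompleteSpace Z]
    (B : V →L[ℝ] W) (C : W →L[ℝ] Z) (τ : ℝ) (hτ : 0 < τ)
    (Lτ : WithLp 2 (V × W) →L[ℝ] WithLp 2 (V × WithLp 2 (W × Z)))
    (hLτ : ∀ (u : V) (w : W),
      Lτ ((WithLp.equiv 2 (V × W)).symm (u, w)) =
        (WithLp.equiv 2 (V × WithLp 2 (W × Z))).symm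
          (ContinuousLinearMap.adjoint B w + (2 / τ) • u,
            (WithLp.equiv 2 (W × Z)).symm (w - B u, C w)))
    (𝒱h : Submodule ℝ (WithLp 2 (V × W)))
    (unh uh : V) (Vh : W)
    (hmem : (WithLp.equiv 2 (V × W)).symm (uh, Vh) ∈ 𝒱h)
    (hFOSLS : ∀ φ ∈ 𝒱h,
      ⟪Lτ ((WithLp.equiv 2 (V × W)).symm (uh, Vh)) -
          (WithLp.equiv 2 (V × WithLp 2 (W × Z))).symm
            ((2 / τ) • unh, (WithLp.equiv 2 (W × Z)).symm (0, 0)),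
        Lτ φ⟫ = 0)
    (unp1 : V) (hnext : unp1 = (2 : ℝ) • uh - unh)
    (E : ℝ) (hE : E = (‖unp1‖ ^ 2 - ‖unh‖ ^ 2) / (2 * τ) + ‖Vh‖ ^ 2) :
    ∀ φ ∈ 𝒱h,
      E = ⟪Lτ ((WithLp.equiv 2 (V × W)).symm (uh, Vh)) -
            (WithLp.equiv 2 (V × WithLp 2 (W × Z))).symm
              ((2 / τ) • unh, (WithLp.equiv 2 (W × Z)).symm (0, 0)),
          (WithLp.equiv 2 (V × WithLp 2 (W × Z))).symm
              (uh, (WithLp.equiv 2 (W × Z)).symm (Vh, 0)) - Lτ φ⟫ :=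
  fosls_energy_law_residual_representation_general B C τ Lτ hLτ 𝒱h unh uh Vh hFOSLS unp1 hnext E hE
end
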